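/- arXiv:2308.09950 — 2 statements merged into one kernel-verified Lean document; each statement's English description precedes it below -/
import Mathlib

section
/- Let n₁, …, n_c, m be positive integers and Σ = Σ_{i=1}^{c}(n_i − 1). Then R(K_{1,n₁}, …, K_{1,n_c}, P_m) ≤ m + Σ. -/
open SimpleGraph Finset

/-- `H` has a copy inside `G` (subgraph isomorphic to `H`). -/
def HasCopy {α : Type*} {β : Type*} (H : SimpleGraph α) (G : SimpleGraph β) : Prop :=
  ∃ f : α → β, Function.Injective f ∧ ∀ a b, H.Adj a b → G.Adj (f a) (f b)

/-- The star `K_{1,n}` with center `0` and `n` leaves. -/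
def starGraphFin (n : ℕ) : SimpleGraph (Fin (n + 1)) where
  Adj a b := a ≠ b ∧ (a = 0 ∨ b = 0)
  symm := ⟨fun a b h => ⟨h.1.symm, h.2.symm⟩⟩
  loopless := ⟨fun a h => h.1 rfl⟩

/-- The graphs `Gs` form an edge-decomposition of the complete graph:
every pair of distinct vertices is adjacent in exactly one of them. -/
def IsDecompOfTop {V : Type*} {c : ℕ} (Gs : Fin c → SimpleGraph V) : Prop :=
  ∀ a b : V, a ≠ b → ∃! i, (Gs i).Adj a b

/-- `N` is Ramsey for the stars `K_{1,n i}` and the path `P_m`. -/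
def starPathRamseyProp (c : ℕ) (n : Fin c → ℕ) (m : ℕ) (N : ℕ) : Prop :=
  ∀ Gs : Fin (c + 1) → SimpleGraph (Fin N), IsDecompOfTop Gs →
    (∃ i : Fin c, HasCopy (starGraphFin (n i)) (Gs i.castSucc)) ∨
      HasCopy (SimpleGraph.pathGraph m) (Gs (Fin.last c))

/-- `N` is Ramsey for the stars `K_{1,n i}`. -/
def starRamseyProp (c : ℕ) (n : Fin c → ℕ) (N : ℕ) : Prop :=
  ∀ Gs : Fin c → SimpleGraph (Fin N), IsDecompOfTop Gs →
    ∃ i, HasCopy (starGraphFin (n i)) (Gs i)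

/-- A proper edge coloring of `G` with `k` colors exists. -/
def HasProperEdgeColoring {V : Type*} (G : SimpleGraph V) (k : ℕ) : Prop :=
  ∃ f : Sym2 V → Fin k, ∀ e₁ ∈ G.edgeSet, ∀ e₂ ∈ G.edgeSet,
    e₁ ≠ e₂ → (∃ v, v ∈ e₁ ∧ v ∈ e₂) → f e₁ ≠ f e₂

/-- The chromatic index (edge chromatic number) of `G`. -/
noncomputable def chromIndex {V : Type*} (G : SimpleGraph V) : ℕ :=
  sInf {k | HasProperEdgeColoring G k}

/-- The complete `n`-partite graph with all parts of size `r`. -/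
def completeMultipartiteEq (n r : ℕ) : SimpleGraph (Fin n × Fin r) where
  Adj a b := a.1 ≠ b.1
  symm := ⟨fun a b h => h.symm⟩
  loopless := ⟨fun a h => h rfl⟩

/-- A Hamilton cycle (as a spanning connected 2-regular subgraph). -/
def IsHamCycle {V : Type*} (C : SimpleGraph V) : Prop :=
  C.Connected ∧ ∀ v, (C.neighborSet v).ncard = 2

/-- A perfect matching (as a spanning 1-regular subgraph). -/
def IsPerfMatching {V : Type*} (M : SimpleGraph V) : Prop :=
  ∀ v, (M.neighborSet v).ncard = 1

/-- The graphs `Gs` partition the edge set of `G`. -/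
def EdgePartition {V : Type*} {ι : Type*} (G : SimpleGraph V) (Gs : ι → SimpleGraph V) : Prop :=
  (∀ i, Gs i ≤ G) ∧ ∀ a b : V, G.Adj a b → ∃! i, (Gs i).Adj a b

lemma star_copy {N : ℕ} (G : SimpleGraph (Fin N)) [DecidableRel G.Adj] (k : ℕ) (v : Fin N)
    (h : k ≤ G.degree v) : HasCopy (starGraphFin k) G := by
  obtain ⟨s, hs, hcard⟩ := Finset.exists_subset_card_eq h
  set g : Fin k → Fin N := fun j => (s.orderIsoOfFin hcard j : Fin N) with hg
  have hg_inj : Function.Injective g := fun a b hab => by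
    simpa using (s.orderIsoOfFin hcard).injective (Subtype.ext hab)
  have hg_mem : ∀ j, G.Adj v (g j) := fun j => by
    have := hs (s.orderIsoOfFin hcard j).2
    rwa [SimpleGraph.mem_neighborFinset] at this
  refine ⟨Fin.cases v g, ?_, ?_⟩
  · intro a b hab
    induction a using Fin.cases with
    | zero =>
      induction b using Fin.cases with
      | zero => rfl
      | succ j => simp at hab; exact absurd hab.symm ((hg_mem j).ne')
    | succ i =>
      induction b using Fin.cases with
      | zero => simp at hab; exact absurd hab ((hg_mem i).ne')
      | succ j => simp at hab; exact congrArg Fin.succ (hg_inj hab)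
  · rintro a b ⟨hne, h0 | h0⟩
    · subst h0
      induction b using Fin.cases with
      | zero => exact absurd rfl hne
      | succ j => simpa using hg_mem j
    · subst h0
      induction a using Fin.cases with
      | zero => exact absurd rfl hne
      | succ j => simpa using (hg_mem j).symm

lemma path_copy {N m : ℕ} (G : SimpleGraph (Fin N)) [DecidableRel G.Adj] (hm : 1 ≤ m) (hN : m ≤ N)
    (hdeg : ∀ v, m - 1 ≤ G.degree v) : HasCopy (SimpleGraph.pathGraph m) G := by
  have key : ∀ k, 1 ≤ k → k ≤ m →
      ∃ l : List (Fin N), l.length = k ∧ l.Nodup ∧ l.IsChain G.Adj := by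
    intro k
    induction k with
    | zero => omega
    | succ k ih =>
      intro _ hk
      rcases Nat.eq_zero_or_pos k with rfl | hk1
      · exact ⟨[⟨0, by omega⟩], rfl, by simp, by simp⟩
      · obtain ⟨l, hlen, hnd, hch⟩ := ih hk1 (by omega)
        have hne : l ≠ [] := by intro h; simp [h] at hlen; omega
        set e := l.getLast hne with he
        have hsub : ¬ (G.neighborFinset e ⊆ l.toFinset) := by
          intro hsub
          have h1 : G.neighborFinset e ⊆ l.toFinset.erase e := by
            intro u hu
            refine Finset.mem_erase.mpr ⟨?_, hsub hu⟩
            intro hue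
            rw [hue] at hu
            exact G.irrefl ((SimpleGraph.mem_neighborFinset _ _ _).mp hu)
          have hcl := Finset.card_le_card h1
          rw [Finset.card_erase_of_mem (List.mem_toFinset.mpr (List.getLast_mem hne))] at hcl
          have hc : l.toFinset.card = k := by
            rw [List.toFinset_card_of_nodup hnd, hlen]
          have hd := hdeg e
          rw [SimpleGraph.degree] at hd
          omega
        obtain ⟨w, hwN, hwl⟩ := Finset.not_subset.mp hsub
        rw [SimpleGraph.mem_neighborFinset] at hwN
        refine ⟨l ++ [w], by simp [hlen], ?_, ?_⟩
        · rw [List.nodup_append]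
          refine ⟨hnd, by simp, ?_⟩
          simp only [List.mem_toFinset] at hwl
          simp [List.Disjoint]
          intro a ha hb; exact hwl (hb ▸ ha)
        · rw [List.isChain_append]
          refine ⟨hch, by simp, ?_⟩
          intro x hx y hy
          rw [List.getLast?_eq_getLast hne] at hx
          simp at hx hy
          rw [← hx, ← hy]
          exact hwN
  obtain ⟨l, hlen, hnd, hch⟩ := key m hm le_rfl
  have hget := List.isChain_iff_getElem.mp hch
  refine ⟨fun i => l.get (Fin.cast hlen.symm i), ?_, ?_⟩
  · intro a b hab
    have := (List.nodup_iff_injective_get.mp hnd) hab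
    rw [Fin.ext_iff] at this ⊢
    simpa using this
  · intro a b hab
    rw [SimpleGraph.pathGraph_adj] at hab
    rcases hab with h | h
    · have h2 := hget a.val (by omega)
      convert h2 using 2 <;> simp [Fin.ext_iff, ← h] <;> omega
    · have h2 := (hget b.val (by omega)).symm
      convert h2 using 2 <;> simp [Fin.ext_iff, ← h] <;> omega

theorem stmt6 (c : ℕ) (n : Fin c → ℕ) (m : ℕ) (hpos : ∀ i, 1 ≤ n i) (hm : 1 ≤ m) :
    starPathRamseyProp c n m (m + ∑ i, (n i - 1)) := by
  classical
  intro Gs hGs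
  by_cases hstar : ∃ i : Fin c, ∃ v, n i ≤ (Gs i.castSucc).degree v
  · obtain ⟨i, v, hv⟩ := hstar
    exact Or.inl ⟨i, star_copy _ _ v hv⟩
  · push_neg at hstar
    right
    refine path_copy _ hm (Nat.le_add_right m _) ?_
    intro v
    have hsub : Finset.univ.erase v ⊆
        Finset.univ.biUnion (fun j : Fin (c + 1) => (Gs j).neighborFinset v) := by
      intro u hu
      obtain ⟨j, hj, -⟩ := hGs v u (fun h => (Finset.mem_erase.mp hu).1 h.symm)
      exact Finset.mem_biUnion.mpr ⟨j, Finset.mem_univ _,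
        (SimpleGraph.mem_neighborFinset _ _ _).mpr hj⟩
    have hcard : m + ∑ i, (n i - 1) - 1 ≤ ∑ j : Fin (c + 1), (Gs j).degree v := by
      calc m + ∑ i, (n i - 1) - 1 = (Finset.univ.erase v).card := by
            simp [Finset.card_erase_of_mem, Finset.card_univ]
        _ ≤ _ := le_trans (Finset.card_le_card hsub) Finset.card_biUnion_le
    rw [Fin.sum_univ_castSucc] at hcard
    have hsum : ∑ i : Fin c, (Gs i.castSucc).degree v ≤ ∑ i, (n i - 1) := by
      apply Finset.sum_le_sum
      intro i _
      have := hstar i v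
      omega
    omega
end

section
/- Let m ≤ Σ where Σ = Σ_{i=1}^{c}(n_i − 1), let Σ ≡ k (mod m−1) with 2 ≤ k ≤ m−2. If Σ ≡ 0 (mod m−2), m + Σ is odd, and all n₁, …, n_c are odd, then R(K_{1,n₁}, …, K_{1,n_c}, P_m) = Σ + m − 1. -/
open SimpleGraph Finset

lemma getVert_eq_support_get {V : Type*} {G : SimpleGraph V} {u v : V} (p : G.Walk u v) :
    ∀ (i : ℕ) (hi : i < p.support.length), p.getVert i = p.support.get ⟨i, hi⟩ := by
  induction p with
  | nil =>
    intro i hi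
    simp only [SimpleGraph.Walk.support_nil, List.length_singleton] at hi
    interval_cases i
    simp [SimpleGraph.Walk.support_nil]
  | cons h q ih =>
    intro i hi
    cases i with
    | zero => simp [SimpleGraph.Walk.getVert_zero, SimpleGraph.Walk.support_cons]
    | succ j =>
      simp only [SimpleGraph.Walk.support_cons] at hi ⊢
      simpa [SimpleGraph.Walk.getVert_cons_succ] using ih j (by simpa using hi)

lemma path_getVert_inj {V : Type*} {G : SimpleGraph V} {u v : V} {p : G.Walk u v}
    (hp : p.IsPath) {i j : ℕ} (hi : i ≤ p.length) (hj : j ≤ p.length)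
    (h : p.getVert i = p.getVert j) : i = j := by
  have hl : p.support.length = p.length + 1 := SimpleGraph.Walk.length_support p
  have hi' : i < p.support.length := by omega
  have hj' : j < p.support.length := by omega
  rw [getVert_eq_support_get p i hi', getVert_eq_support_get p j hj'] at h
  have := hp.support_nodup
  have h2 := List.nodup_iff_injective_get.mp this h
  exact congrArg Fin.val h2

lemma getVert_mem_support' {V : Type*} {G : SimpleGraph V} {u v : V} (p : G.Walk u v)
    (i : ℕ) : p.getVert i ∈ p.support := by
  by_cases hi : i ≤ p.length
  · have hi' : i < p.support.length := by
      have := SimpleGraph.Walk.length_support p; omega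
    rw [getVert_eq_support_get p i hi']; exact List.get_mem _ _
  · rw [SimpleGraph.Walk.getVert_of_length_le p (by omega)]
    exact SimpleGraph.Walk.end_mem_support p

lemma hasCopy_path_of_long_path {V : Type*} {H : SimpleGraph V} {u v : V} {m : ℕ}
    (p : H.Walk u v) (hp : p.IsPath) (hlen : m - 1 ≤ p.length) :
    HasCopy (SimpleGraph.pathGraph m) H := by
  refine ⟨fun i => p.getVert i.val, ?_, ?_⟩
  · intro a b hab
    have ha : (a : ℕ) ≤ p.length := le_trans (by omega) hlen
    have hb : (b : ℕ) ≤ p.length := le_trans (by omega) hlen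
    exact Fin.ext (path_getVert_inj hp ha hb hab)
  · intro a b hab
    rw [SimpleGraph.pathGraph_adj] at hab
    rcases hab with h | h
    · have : (a : ℕ) < p.length := by have := b.isLt; omega
      have := p.adj_getVert_succ this
      rwa [h] at this
    · have : (b : ℕ) < p.length := by have := a.isLt; omega
      have := (p.adj_getVert_succ this).symm
      rwa [h] at this

lemma no_star_degree {N ni : ℕ} (G : SimpleGraph (Fin N)) [DecidableRel G.Adj]
    (h1 : 1 ≤ ni) (h : ¬ HasCopy (starGraphFin ni) G) (v : Fin N) :
    ((univ : Finset (Fin N)).filter (G.Adj v ·)).card ≤ ni - 1 := by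
  by_contra hc
  apply h
  have hge : ni ≤ ((univ : Finset (Fin N)).filter (G.Adj v ·)).card := by omega
  obtain ⟨s, hs_sub, hs_card⟩ := Finset.exists_subset_card_eq hge
  have hmem : ∀ a ∈ s, G.Adj v a := fun a ha => (mem_filter.mp (hs_sub ha)).2
  have hvs : v ∉ s := fun hv => G.loopless.irrefl v (hmem v hv)
  set g : Fin ni → Fin N := fun j => (s.equivFin.symm (Fin.cast hs_card.symm j) : Fin N)
    with hg
  have hg_mem : ∀ j, g j ∈ s := fun j => (s.equivFin.symm _).2
  have hg_inj : Function.Injective g := by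
    intro a b hab
    have := Subtype.ext hab
    have := s.equivFin.symm.injective this
    simpa [Fin.ext_iff] using congrArg Fin.val this
  refine ⟨fun i : Fin (ni + 1) => if h : i.val = 0 then v else g ⟨i.val - 1, by omega⟩, ?_, ?_⟩
  · intro a b hab
    beta_reduce at hab
    by_cases ha : a.val = 0 <;> by_cases hb : b.val = 0
    · exact Fin.ext (by omega)
    · rw [dif_pos ha, dif_neg hb] at hab
      exact absurd (hab ▸ hg_mem _) hvs
    · rw [dif_neg ha, dif_pos hb] at hab
      exact absurd (hab ▸ hg_mem _) (by rw [← hab] at hvs ⊢; exact fun hh => hvs (hab ▸ hh))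
    · rw [dif_neg ha, dif_neg hb] at hab
      have := hg_inj hab
      simp only [Fin.mk.injEq] at this
      exact Fin.ext (by omega)
  · intro a b hab
    obtain ⟨hne, h0⟩ := hab
    dsimp only
    rcases h0 with h0 | h0
    · subst h0
      have hb : b.val ≠ 0 := by
        simp only [ne_eq, Fin.ext_iff, Fin.val_zero] at hne
        omega
      simp only [Fin.val_zero]
      simp only [dif_neg hb]
      exact hmem _ (hg_mem _)
    · subst h0
      have ha : a.val ≠ 0 := by
        simp only [ne_eq, Fin.ext_iff, Fin.val_zero] at hne
        omega
      simp only [Fin.val_zero]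
      simp only [dif_neg ha]
      exact (hmem _ (hg_mem _)).symm

lemma degree_sum {N c' : ℕ} (Gs : Fin (c' + 1) → SimpleGraph (Fin N))
    [∀ i, DecidableRel (Gs i).Adj] (hd : IsDecompOfTop Gs) (v : Fin N) :
    ∑ i, ((univ : Finset (Fin N)).filter ((Gs i).Adj v ·)).card = N - 1 := by
  classical
  set f : Fin N → Fin (c' + 1) := fun u =>
    if h : v ≠ u then (hd v u h).choose else 0 with hf
  have hspec : ∀ u (h : v ≠ u), (Gs ((hd v u h).choose)).Adj v u :=
    fun u h => (hd v u h).choose_spec.1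
  have huniq : ∀ u (h : v ≠ u) i, (Gs i).Adj v u → i = (hd v u h).choose :=
    fun u h i hi => (hd v u h).choose_spec.2 i hi
  have hfib : ∀ i, (univ.erase v).filter (fun u => f u = i)
      = univ.filter ((Gs i).Adj v ·) := by
    intro i
    ext u
    constructor
    · intro hu
      obtain ⟨hu1, hfu⟩ := mem_filter.mp hu
      have hne : u ≠ v := (mem_erase.mp hu1).1
      rw [hf] at hfu
      dsimp only at hfu
      rw [dif_pos (Ne.symm hne)] at hfu
      exact mem_filter.mpr ⟨mem_univ u, hfu ▸ hspec u (Ne.symm hne)⟩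
    · intro hu
      have hadj : (Gs i).Adj v u := (mem_filter.mp hu).2
      have hne : v ≠ u := (Gs i).ne_of_adj hadj
      refine mem_filter.mpr ⟨mem_erase.mpr ⟨hne.symm, mem_univ u⟩, ?_⟩
      rw [hf]
      dsimp only
      rw [dif_pos hne]
      exact (huniq u hne i hadj).symm
  have h1 : (univ.erase v).card = ∑ i, ((univ.erase v).filter (fun u => f u = i)).card :=
    Finset.card_eq_sum_card_fiberwise (fun u _ => mem_univ (f u))
  have h2 : (univ.erase v).card = N - 1 := by
    rw [Finset.card_erase_of_mem (mem_univ v), Finset.card_univ, Fintype.card_fin]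
  rw [← h2, h1]
  exact Finset.sum_congr rfl (fun i _ => by rw [hfib i])

lemma path_of_minDegree {N m : ℕ} (H : SimpleGraph (Fin N)) [DecidableRel H.Adj]
    (hm : 4 ≤ m)
    (hdeg : ∀ v : Fin N, m - 2 ≤ ((univ : Finset (Fin N)).filter (H.Adj v ·)).card)
    (hdvd : ¬ ((m - 1) ∣ N)) :
    HasCopy (SimpleGraph.pathGraph m) H := by
  classical
  by_contra hno
  set CF : Fin N → Finset (Fin N) := fun v => univ.filter (fun u => H.Reachable v u) with hCF
  have hCFmem : ∀ v, v ∈ CF v := fun v => mem_filter.mpr ⟨mem_univ v, Reachable.refl v⟩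
  have hCFmem' : ∀ v u, u ∈ CF v ↔ H.Reachable v u := by intro v u; simp [hCF]
  have hCFcong : ∀ v u, H.Reachable v u → CF v = CF u := by
    intro v u h; ext w; simp only [hCF, mem_filter, mem_univ, true_and]
    exact ⟨fun h2 => h.symm.trans h2, fun h2 => h.trans h2⟩
  have hclass : ∀ v : Fin N, (CF v).card = m - 1 := by
    intro v
    set S : Finset ℕ := (range (N + 1)).filter
      (fun l => ∃ x y : Fin N, ∃ p : H.Walk x y, p.IsPath ∧ p.length = l ∧ v ∈ p.support)
      with hS
    have h0 : 0 ∈ S :=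
      mem_filter.mpr ⟨by simp, ⟨v, v, Walk.nil, Walk.IsPath.nil, rfl, by simp⟩⟩
    have hSne : S.Nonempty := ⟨0, h0⟩
    set L := S.max' hSne with hL
    obtain ⟨x, y, p, hp, hlen, hv⟩ := (mem_filter.mp (S.max'_mem hSne)).2
    have hmax : ∀ (x' y' : Fin N) (q : H.Walk x' y'), q.IsPath → v ∈ q.support →
        q.length ≤ L := by
      intro x' y' q hq hvq
      apply le_max'
      refine mem_filter.mpr ⟨mem_range.mpr ?_, ⟨x', y', q, hq, rfl, hvq⟩⟩
      have := hq.length_lt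
      simp only [Fintype.card_fin] at this
      omega
    have hLm : L ≤ m - 2 := by
      by_contra h
      exact hno (hasCopy_path_of_long_path p hp (by omega))
    have hnbrx : ∀ z, H.Adj x z → z ∈ p.support := by
      intro z hz
      by_contra hzs
      have hq : (Walk.cons hz.symm p).IsPath := hp.cons hzs
      have := hmax _ _ (Walk.cons hz.symm p) hq (by simp [hv])
      simp only [Walk.length_cons, hlen] at this
      omega
    have hsub : univ.filter (H.Adj x ·) ⊆ p.support.toFinset.erase x := by
      intro z hzf
      have hz : H.Adj x z := (mem_filter.mp hzf).2
      exact Finset.mem_erase.mpr ⟨fun h => H.loopless.irrefl x (h ▸ hz),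
        List.mem_toFinset.mpr (hnbrx z hz)⟩
    have hsuppcard : p.support.toFinset.card = L + 1 := by
      rw [List.toFinset_card_of_nodup hp.support_nodup, Walk.length_support, hlen]
    have hxsupp : x ∈ p.support.toFinset := List.mem_toFinset.mpr p.start_mem_support
    have hcard1 : (univ.filter (H.Adj x ·)).card ≤ L := by
      calc (univ.filter (H.Adj x ·)).card ≤ (p.support.toFinset.erase x).card :=
            Finset.card_le_card hsub
        _ = L := by rw [Finset.card_erase_of_mem hxsupp, hsuppcard]; omega
    have hLe : L = m - 2 := by have := hdeg x; omega
    have heq : univ.filter (H.Adj x ·) = p.support.toFinset.erase x := by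
      apply Finset.eq_of_subset_of_card_le hsub
      rw [Finset.card_erase_of_mem hxsupp, hsuppcard]
      have := hdeg x; omega
    have hadjx : ∀ z ∈ p.support, z ≠ x → H.Adj x z := by
      intro z hz hzx
      have : z ∈ univ.filter (H.Adj x ·) :=
        heq ▸ Finset.mem_erase.mpr ⟨hzx, List.mem_toFinset.mpr hz⟩
      exact (mem_filter.mp this).2
    have hx0 : p.getVert 0 = x := p.getVert_zero
    have hyL : p.getVert L ≠ x := by
      intro h
      have := path_getVert_inj hp (show L ≤ p.length by omega) (show 0 ≤ p.length by omega)
        (h.trans hx0.symm)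
      omega
    have hxy : H.Adj x (p.getVert L) := hadjx _ (getVert_mem_support' p L) hyL
    have hclosed : ∀ (j : ℕ), j ≤ p.length → ∀ z, H.Adj (p.getVert j) z → z ∈ p.support := by
      intro j hj z hz
      by_contra hzs
      apply hno
      refine ⟨fun i : Fin m => if i.val = 0 then z
        else p.getVert ((j + (i.val - 1)) % (m - 1)), ?_, ?_⟩
      · intro a b hab
        simp only at hab
        by_cases ha : a.val = 0 <;> by_cases hb : b.val = 0
        · exact Fin.ext (by omega)
        · rw [if_pos ha, if_neg hb] at hab
          exact absurd (by rw [hab]; exact getVert_mem_support' p _) hzs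
        · rw [if_neg ha, if_pos hb] at hab
          exact absurd (by rw [← hab]; exact getVert_mem_support' p _) hzs
        · rw [if_neg ha, if_neg hb] at hab
          have hmod1 : (j + (a.val - 1)) % (m - 1) ≤ p.length := by
            have := Nat.mod_lt (j + (a.val - 1)) (show 0 < m - 1 by omega)
            omega
          have hmod2 : (j + (b.val - 1)) % (m - 1) ≤ p.length := by
            have := Nat.mod_lt (j + (b.val - 1)) (show 0 < m - 1 by omega)
            omega
          have hij := path_getVert_inj hp hmod1 hmod2 hab
          have h2 : Nat.ModEq (m - 1) (a.val - 1) (b.val - 1) :=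
            (show Nat.ModEq (m - 1) (j + (a.val - 1)) (j + (b.val - 1)) from hij).add_left_cancel' j
          have ha1 : a.val - 1 < m - 1 := by have := a.isLt; omega
          have hb1 : b.val - 1 < m - 1 := by have := b.isLt; omega
          have h3 : a.val - 1 = b.val - 1 := by
            have h4 := h2
            unfold Nat.ModEq at h4
            rwa [Nat.mod_eq_of_lt ha1, Nat.mod_eq_of_lt hb1] at h4
          exact Fin.ext (by omega)
      · have hstep : ∀ a b : Fin m, a.val + 1 = b.val →
            H.Adj (if a.val = 0 then z else p.getVert ((j + (a.val - 1)) % (m - 1)))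
              (if b.val = 0 then z else p.getVert ((j + (b.val - 1)) % (m - 1))) := by
          intro a b hab
          have hbne : b.val ≠ 0 := by omega
          rw [if_neg hbne]
          by_cases ha : a.val = 0
          · rw [if_pos ha]
            have hb1 : b.val - 1 = 0 := by omega
            rw [hb1, Nat.add_zero, Nat.mod_eq_of_lt (show j < m - 1 by omega)]
            exact hz.symm
          · rw [if_neg ha]
            have hbv : b.val - 1 = a.val := by omega
            rw [hbv]
            set ia := (j + (a.val - 1)) % (m - 1) with hia
            have harg : j + a.val = (j + (a.val - 1)) + 1 := by omega
            have hiaL : ia < m - 1 := Nat.mod_lt _ (by omega)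
            have hnext : (j + a.val) % (m - 1) = (ia + 1) % (m - 1) := by
              rw [harg, Nat.add_mod (j + (a.val - 1)) 1, ← hia,
                Nat.mod_eq_of_lt (show 1 < m - 1 by omega)]
            rw [hnext]
            by_cases hlt : ia < L
            · rw [Nat.mod_eq_of_lt (show ia + 1 < m - 1 by omega)]
              exact p.adj_getVert_succ (show ia < p.length by omega)
            · have hiaL2 : ia = L := by omega
              have hz0 : (ia + 1) % (m - 1) = 0 := by
                rw [hiaL2, show L + 1 = m - 1 by omega, Nat.mod_self]
              rw [hz0, hx0, hiaL2]
              exact hxy.symm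
        intro a b hab
        rw [SimpleGraph.pathGraph_adj] at hab
        rcases hab with h | h
        · exact hstep a b h
        · exact (hstep b a h).symm
    have hsupp_idx : ∀ a, a ∈ p.support → ∃ i, i ≤ p.length ∧ p.getVert i = a := by
      intro a ha
      obtain ⟨i, hi⟩ := List.mem_iff_get.mp ha
      refine ⟨i.val, by have := Walk.length_support p; have := i.isLt; omega, ?_⟩
      rw [getVert_eq_support_get p i.val i.isLt]
      simpa using hi
    have hwalkclosed : ∀ (a b : Fin N) (q : H.Walk a b), a ∈ p.support → b ∈ p.support := by
      intro a b q
      induction q with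
      | nil => exact id
      | cons hadj q ih =>
        intro ha
        obtain ⟨i, hi, hg⟩ := hsupp_idx _ ha
        exact ih (hclosed i hi _ (hg ▸ hadj))
    have hsuppCF : CF v = p.support.toFinset := by
      ext w
      rw [hCFmem', List.mem_toFinset]
      constructor
      · intro hw; obtain ⟨q⟩ := hw; exact hwalkclosed v w q hv
      · intro hw
        have h1 : H.Reachable x v := ⟨p.takeUntil v hv⟩
        have h2 : H.Reachable x w := ⟨p.takeUntil w hw⟩
        exact h1.symm.trans h2
    rw [hsuppCF, hsuppcard]
    omega
  -- counting
  apply hdvd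
  set rep : Fin N → Fin N := fun v => ((CF v).min).getD v with hrepdef
  have hrepmem : ∀ v, rep v ∈ CF v := by
    intro v
    obtain ⟨a, ha⟩ := Finset.min_of_nonempty (⟨v, hCFmem v⟩ : (CF v).Nonempty)
    have h2 : rep v = a := by show Option.getD (CF v).min v = a; rw [ha]; rfl
    rw [h2]; exact Finset.mem_of_min ha
  have hreach : ∀ v, H.Reachable v (rep v) := fun v => (hCFmem' v _).mp (hrepmem v)
  have hrepcong : ∀ v u, H.Reachable v u → rep v = rep u := by
    intro v u h
    obtain ⟨a, ha⟩ := Finset.min_of_nonempty (⟨u, hCFmem u⟩ : (CF u).Nonempty)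
    have hv' : (CF v).min = a := by rw [hCFcong v u h]; exact ha
    show Option.getD (CF v).min v = Option.getD (CF u).min u
    rw [ha, hv']
    rfl
  have hrepidem : ∀ v, rep (rep v) = rep v := fun v => (hrepcong v (rep v) (hreach v)).symm
  have hfib : ∀ r ∈ univ.image rep, univ.filter (fun u => rep u = r) = CF r := by
    intro r hr
    obtain ⟨v₀, _, hv₀⟩ := mem_image.mp hr
    have hrr : rep r = r := by rw [← hv₀, hrepidem]
    ext u
    simp only [mem_filter, mem_univ, true_and, hCFmem']
    constructor
    · intro h; exact (h ▸ hreach u).symm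
    · intro h; exact (hrepcong r u h).symm.trans hrr
  have hcount : N = (univ.image rep).card * (m - 1) := by
    have h1 : (univ : Finset (Fin N)).card
        = ∑ r ∈ univ.image rep, (univ.filter (fun u => rep u = r)).card :=
      Finset.card_eq_sum_card_fiberwise (fun u _ => mem_image_of_mem rep (mem_univ u))
    calc N = (univ : Finset (Fin N)).card := by simp
      _ = ∑ r ∈ univ.image rep, (univ.filter (fun u => rep u = r)).card := h1
      _ = ∑ _r ∈ univ.image rep, (m - 1) := by
          apply Finset.sum_congr rfl; intro r hr; rw [hfib r hr, hclass r]
      _ = (univ.image rep).card * (m - 1) := by rw [Finset.sum_const, smul_eq_mul]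
  exact ⟨(univ.image rep).card, hcount.trans (Nat.mul_comm _ _)⟩

lemma exists_partition_fn : ∀ (c : ℕ) (caps : Fin (c + 1) → ℕ) (D : Finset ℕ),
    D.card = ∑ i, caps i →
    ∃ F : ℕ → Fin (c + 1), ∀ i, (D.filter fun d => F d = i).card = caps i := by
  intro c
  induction c with
  | zero =>
    intro caps D hD
    refine ⟨fun _ => 0, fun i => ?_⟩
    have hi : i = 0 := Fin.fin_one_eq_zero i
    subst hi
    rw [Finset.filter_true_of_mem (fun _ _ => rfl), hD]
    simp
  | succ c ih =>
    intro caps D hD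
    have hc0 : caps 0 ≤ D.card := by
      rw [hD, Fin.sum_univ_succ]; omega
    obtain ⟨E, hE_sub, hE_card⟩ := Finset.exists_subset_card_eq hc0
    have hD' : (D \ E).card = ∑ i : Fin (c + 1), caps i.succ := by
      rw [Finset.card_sdiff_of_subset hE_sub, hE_card, hD, Fin.sum_univ_succ]
      omega
    obtain ⟨F', hF'⟩ := ih (fun i => caps i.succ) (D \ E) hD'
    refine ⟨fun d => if d ∈ E then 0 else (F' d).succ, fun i => ?_⟩
    rcases Fin.eq_zero_or_eq_succ i with hi | ⟨j, hj⟩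
    · subst hi
      have : (D.filter fun d => (if d ∈ E then 0 else (F' d).succ) = 0) = E := by
        ext d
        simp only [mem_filter]
        constructor
        · rintro ⟨hdD, hd⟩
          by_contra hdE
          rw [if_neg hdE] at hd
          exact Fin.succ_ne_zero _ hd
        · intro hdE
          exact ⟨hE_sub hdE, by rw [if_pos hdE]⟩
      rw [this, hE_card]
    · subst hj
      have : (D.filter fun d => (if d ∈ E then 0 else (F' d).succ) = j.succ)
          = ((D \ E).filter fun d => F' d = j) := by
        ext d
        simp only [mem_filter, mem_sdiff]
        constructor
        · rintro ⟨hdD, hd⟩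
          by_cases hdE : d ∈ E
          · rw [if_pos hdE] at hd
            exact absurd hd.symm (Fin.succ_ne_zero _)
          · rw [if_neg hdE] at hd
            exact ⟨⟨hdD, hdE⟩, Fin.succ_injective _ hd⟩
        · rintro ⟨⟨hdD, hdE⟩, hd⟩
          exact ⟨hdD, by rw [if_neg hdE, hd]⟩
      rw [this, hF' j]

set_option maxHeartbeats 1600000 in
lemma no_ramsey_below {c' m : ℕ} (n : Fin (c' + 1) → ℕ) (N₀ : ℕ)
    (hpos : ∀ i, 1 ≤ n i) (hallodd : ∀ i, Odd (n i))
    (hm4 : 4 ≤ m) (hmodd : Odd m)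
    (hdvd : (m - 2) ∣ ∑ i, (n i - 1)) (hle : m ≤ ∑ i, (n i - 1))
    (hN₀ : N₀ ≤ (∑ i, (n i - 1)) + (m - 2)) :
    ¬ starPathRamseyProp (c' + 1) n m N₀ := by
  intro hRam
  classical
  set S := ∑ i, (n i - 1) with hSdef
  have hSeven : 2 * (S / 2) = S := by
    have h2 : (2 : ℕ) ∣ S := by
      apply Finset.dvd_sum
      intro i _
      obtain ⟨w, hw⟩ := hallodd i
      exact ⟨w, by omega⟩
    omega
  set r := m - 2 with hrdef
  obtain ⟨w, hw⟩ := hmodd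
  have hro : Odd r := ⟨w - 1, by omega⟩
  set q := S / r with hqdef
  have hq : S = r * q := (Nat.div_mul_cancel hdvd).symm.trans (Nat.mul_comm _ _)
  have hqeven : Even q := by
    rcases Nat.even_mul.mp (show Even (r * q) by rw [← hq]; exact ⟨S/2, by omega⟩) with h | h
    · exact absurd h (by simpa [Nat.odd_iff, Nat.even_iff] using hro)
    · exact h
  have hqpos : 2 ≤ q := by
    rcases hqeven with ⟨u, hu⟩
    have : q ≠ 0 := fun h0 => by rw [h0, Nat.mul_zero] at hq; omega
    omega
  set t := q + 1 with htdef
  have hto : Odd t := by rcases hqeven with ⟨u, hu⟩; exact ⟨u, by omega⟩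
  set N' := r * t with hN'def
  have hN'S : N' = S + r := by rw [hN'def, htdef, Nat.mul_add, Nat.mul_one, ← hq]
  haveI : NeZero N' := ⟨Nat.mul_ne_zero (by omega) (by omega)⟩
  have htN' : t ∣ N' := dvd_mul_left t r
  have hN'odd : Odd N' := hro.mul hto
  set M := (N' - 1) / 2 with hMdef
  -- arithmetic on M and D
  obtain ⟨a, ha⟩ := hro
  obtain ⟨b, hb⟩ := hto
  have hNab : N' = 4 * (a * b) + 2 * a + 2 * b + 1 := by rw [hN'def, ha, hb]; ring
  have hMab : M = 2 * (a * b) + a + b := by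
    rw [hMdef]
    generalize a * b = ab at hNab
    omega
  have hMt : M / t = a := by
    have h1 : M = b + t * a := by rw [hb, hMab]; ring
    rw [h1, Nat.add_mul_div_left b a (show 0 < t by omega), Nat.div_eq_of_lt (by omega)]
    omega
  set D := (Finset.Ioc 0 M).filter (fun d => ¬ t ∣ d) with hDdef
  have hDcard : D.card = M - M / t := by
    have h1 := Finset.card_filter_add_card_filter_not
      (s := Finset.Ioc 0 M) (p := (t ∣ ·))
    have h2 : ((Finset.Ioc 0 M).filter (t ∣ ·)).card = M / t :=
      Nat.Ioc_filter_dvd_card_eq_div M t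
    have h3 : (Finset.Ioc 0 M).card = M := by simp
    have h4 : M / t ≤ M := Nat.div_le_self _ _
    rw [hDdef]
    omega
  have hcaps : D.card = ∑ i, (n i - 1) / 2 := by
    have h2 : ∀ i, 2 * ((n i - 1) / 2) = n i - 1 := by
      intro i
      obtain ⟨u, hu⟩ := hallodd i
      have h1 : 1 ≤ n i := hpos i
      omega
    have h3 : 2 * ∑ i, (n i - 1) / 2 = S := by
      rw [Finset.mul_sum, hSdef]
      exact Finset.sum_congr rfl (fun i _ => h2 i)
    have hq2b : q = 2 * b := by omega
    have h5 : S = 4 * (a * b) + 2 * b := by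
      rw [hq, ha, hq2b]; ring
    rw [hDcard, hMt, hMab]
    generalize a * b = ab at h5 hMab ⊢
    omega
  obtain ⟨F, hF⟩ := exists_partition_fn c' (fun i => (n i - 1) / 2) D hcaps
  set col : ℕ → Fin (c' + 1 + 1) :=
    fun d => if t ∣ d then Fin.last (c' + 1) else (F d).castSucc with hcoldef
  set emb : Fin N₀ → ZMod N' := fun v => ((v.val : ℕ) : ZMod N') with hembdef
  have hemb_val : ∀ v : Fin N₀, (emb v).val = v.val := by
    intro v
    exact ZMod.val_cast_of_lt (lt_of_lt_of_le v.isLt (by omega))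
  have hemb_inj : Function.Injective emb := by
    intro v w hvw
    have := congrArg ZMod.val hvw
    rw [hemb_val, hemb_val] at this
    exact Fin.ext this
  set dlow : ZMod N' → ℕ := fun x => min x.val (N' - x.val) with hdlowdef
  have hdlow_neg : ∀ x : ZMod N', x ≠ 0 → dlow (-x) = dlow x := by
    intro x hx
    have h1 : (-x).val = N' - x.val := by rw [ZMod.neg_val, if_neg hx]
    have h2 := ZMod.val_lt x
    simp only [hdlowdef, h1]
    omega
  have hdlow_mem : ∀ x : ZMod N', x ≠ 0 → dlow x ∈ Finset.Ioc 0 M := by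
    intro x hx
    have h1 : x.val ≠ 0 := fun h => hx ((ZMod.val_eq_zero x).mp h)
    have h2 := ZMod.val_lt x
    obtain ⟨ww, hww⟩ := hN'odd
    simp only [hdlowdef, Finset.mem_Ioc, hMdef]
    omega
  have hdlow_dvd : ∀ x : ZMod N', t ∣ dlow x ↔ t ∣ x.val := by
    intro x
    have h2 := ZMod.val_lt x
    have hsub : t ∣ (N' - x.val) ↔ t ∣ x.val := by
      constructor
      · intro h
        have := Nat.dvd_sub htN' h
        rwa [Nat.sub_sub_self (le_of_lt h2)] at this
      · intro h
        exact Nat.dvd_sub htN' h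
    by_cases hmin : x.val ≤ N' - x.val
    · simp only [hdlowdef, min_eq_left hmin]
    · simp only [hdlowdef, min_eq_right (le_of_not_ge hmin)]
      exact hsub
  have hdlow_eq : ∀ (x : ZMod N') (d : ℕ), x ≠ 0 → dlow x = d →
      x = (d : ZMod N') ∨ x = -(d : ZMod N') := by
    intro x d hx hd
    have h2 := ZMod.val_lt x
    rcases le_or_gt x.val (N' - x.val) with hmin | hmin
    · left
      rw [hdlowdef] at hd
      simp only [min_eq_left hmin] at hd
      rw [← hd]
      exact (ZMod.natCast_rightInverse x).symm
    · right
      rw [hdlowdef] at hd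
      simp only [min_eq_right (le_of_lt hmin)] at hd
      have hneg : (-x).val = N' - x.val := by
        rw [ZMod.neg_val, if_neg hx]
      have : -x = (d : ZMod N') := by
        rw [← hd, ← hneg]
        exact (ZMod.natCast_rightInverse (-x)).symm
      rw [← this, neg_neg]
  set Gs : Fin (c' + 1 + 1) → SimpleGraph (Fin N₀) := fun i =>
    { Adj := fun x y => x ≠ y ∧ col (dlow (emb x - emb y)) = i
      symm := by
        constructor
        intro x y hxy
        refine ⟨hxy.1.symm, ?_⟩
        rw [show emb y - emb x = -(emb x - emb y) by ring,
          hdlow_neg _ (sub_ne_zero.mpr (fun he => hxy.1 (hemb_inj he)))]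
        exact hxy.2
      loopless := ⟨fun x hx => hx.1 rfl⟩ } with hGsdef
  have hdecomp : IsDecompOfTop Gs := by
    intro x y hxy
    exact ⟨col (dlow (emb x - emb y)), ⟨hxy, rfl⟩, fun j hj => hj.2.symm⟩
  rcases hRam Gs hdecomp with ⟨i, hstar⟩ | hpath
  · -- star contradiction
    obtain ⟨φ, hφinj, hφadj⟩ := hstar
    set v := φ 0 with hvdef
    set P := D.filter (fun d => F d = i) with hPdef
    set T := P.image (fun d : ℕ => (d : ZMod N') + emb v) ∪
      P.image (fun d : ℕ => -(d : ZMod N') + emb v) with hTdef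
    have hkey : ∀ j : Fin (n i), emb (φ j.succ) ∈ T := by
      intro j
      have hadj := hφadj j.succ 0 ⟨Fin.succ_ne_zero j, Or.inr rfl⟩
      obtain ⟨hne, hcol⟩ := hadj
      set x := emb (φ j.succ) - emb v with hxdef
      have hx0 : x ≠ 0 := sub_ne_zero.mpr (fun he => hne (hemb_inj he))
      have hnd : ¬ t ∣ dlow x := by
        intro hdd
        rw [hcoldef] at hcol
        simp only [if_pos hdd] at hcol
        exact absurd hcol.symm (Fin.ne_of_lt (Fin.castSucc_lt_last i))
      have hFd : F (dlow x) = i := by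
        rw [hcoldef] at hcol
        simp only [if_neg hnd] at hcol
        exact Fin.castSucc_injective _ hcol
      have hdP : dlow x ∈ P := by
        rw [hPdef]
        exact mem_filter.mpr ⟨mem_filter.mpr ⟨hdlow_mem x hx0, hnd⟩, hFd⟩
      rcases hdlow_eq x (dlow x) hx0 rfl with hcase | hcase
      · apply Finset.mem_union_left
        apply Finset.mem_image.mpr
        refine ⟨dlow x, hdP, ?_⟩
        rw [← hcase, hxdef]
        ring
      · apply Finset.mem_union_right
        apply Finset.mem_image.mpr
        refine ⟨dlow x, hdP, ?_⟩
        rw [← hcase, hxdef]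
        ring
    have hTcard : T.card ≤ n i - 1 := by
      have h1 : T.card ≤ P.card + P.card :=
        le_trans (Finset.card_union_le _ _)
          (by gcongr <;> exact Finset.card_image_le)
      have h2 : P.card = (n i - 1) / 2 := hF i
      obtain ⟨u, hu⟩ := hallodd i
      have := hpos i
      omega
    have hinj2 : ∀ j1 j2 : Fin (n i), emb (φ j1.succ) = emb (φ j2.succ) → j1 = j2 := by
      intro j1 j2 h
      exact Fin.succ_injective _ (hφinj (hemb_inj h))
    have hcard : (univ : Finset (Fin (n i))).card ≤ T.card := by
      apply Finset.card_le_card_of_injOn (fun j => emb (φ j.succ))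
      · intro j _; exact hkey j
      · intro j1 _ j2 _ h; exact hinj2 j1 j2 h
    simp only [Finset.card_univ, Fintype.card_fin] at hcard
    have := hpos i
    omega
  · -- path contradiction
    obtain ⟨φ, hφinj, hφadj⟩ := hpath
    set π := ZMod.castHom htN' (ZMod t) with hπdef
    have hπ : ∀ x : ZMod N', π x = ((x.val : ℕ) : ZMod t) := by
      intro x
      rw [hπdef, ZMod.castHom_apply, ← ZMod.natCast_val]
    have hπ0 : ∀ x : ZMod N', π x = 0 ↔ t ∣ x.val := by
      intro x
      rw [hπ x]
      exact ZMod.natCast_eq_zero_iff _ _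
    have hconsec : ∀ (j : ℕ) (hj : j + 1 < m),
        π (emb (φ ⟨j + 1, hj⟩)) = π (emb (φ ⟨j, by omega⟩)) := by
      intro j hj
      have hadj := hφadj ⟨j, by omega⟩ ⟨j + 1, hj⟩
        (SimpleGraph.pathGraph_adj.mpr (Or.inl rfl))
      obtain ⟨hne, hcol⟩ := hadj
      set x := emb (φ ⟨j, by omega⟩) - emb (φ ⟨j + 1, hj⟩) with hxdef
      have hdd : t ∣ dlow x := by
        by_contra hnd
        rw [hcoldef] at hcol
        simp only [if_neg hnd] at hcol
        exact absurd hcol (Fin.ne_of_lt (Fin.castSucc_lt_last (F (dlow x))))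
      have hdv : t ∣ x.val := (hdlow_dvd x).mp hdd
      have : π x = 0 := (hπ0 x).mpr hdv
      rw [hxdef, map_sub] at this
      have := sub_eq_zero.mp this
      exact this.symm
    have hconst : ∀ (j : ℕ) (hj : j < m),
        π (emb (φ ⟨j, hj⟩)) = π (emb (φ ⟨0, by omega⟩)) := by
      intro j
      induction j with
      | zero => intro hj; rfl
      | succ j ih =>
        intro hj
        rw [hconsec j hj]
        exact ih (by omega)
    have hdiff : ∀ j : Fin m, t ∣ (emb (φ j) - emb (φ ⟨0, by omega⟩)).val := by
      intro j
      have h1 := hconst j.val j.isLt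
      have h2 : π (emb (φ j) - emb (φ ⟨0, by omega⟩)) = 0 := by
        rw [map_sub]
        rw [show (⟨j.val, j.isLt⟩ : Fin m) = j from Fin.ext rfl] at h1
        rw [h1, sub_self]
      exact (hπ0 _).mp h2
    set uf : Fin m → ℕ := fun j => (emb (φ j) - emb (φ ⟨0, by omega⟩)).val / t with hufdef
    have huf_lt : ∀ j, uf j < r := by
      intro j
      have h1 : t * uf j = (emb (φ j) - emb (φ ⟨0, by omega⟩)).val :=
        Nat.mul_div_cancel' (hdiff j)
      have h2 := ZMod.val_lt (emb (φ j) - emb (φ ⟨0, by omega⟩))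
      have h3 : t * uf j < t * r := by
        rw [h1, Nat.mul_comm t r]
        exact hN'def ▸ h2
      exact Nat.lt_of_mul_lt_mul_left h3
    have huf_inj : ∀ j1 j2 : Fin m, uf j1 = uf j2 → j1 = j2 := by
      intro j1 j2 h
      have h1 : t * uf j1 = (emb (φ j1) - emb (φ ⟨0, by omega⟩)).val :=
        Nat.mul_div_cancel' (hdiff j1)
      have h2 : t * uf j2 = (emb (φ j2) - emb (φ ⟨0, by omega⟩)).val :=
        Nat.mul_div_cancel' (hdiff j2)
      have h3 : (emb (φ j1) - emb (φ ⟨0, by omega⟩)).val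
          = (emb (φ j2) - emb (φ ⟨0, by omega⟩)).val := by
        rw [← h1, ← h2, h]
      have h4 : emb (φ j1) - emb (φ ⟨0, by omega⟩) = emb (φ j2) - emb (φ ⟨0, by omega⟩) := by
        have e1 := ZMod.natCast_rightInverse (n := N') (emb (φ j1) - emb (φ ⟨0, by omega⟩))
        have e2 := ZMod.natCast_rightInverse (n := N') (emb (φ j2) - emb (φ ⟨0, by omega⟩))
        rw [← e1, ← e2, h3]
      exact hφinj (hemb_inj (sub_left_inj.mp h4))
    have hcard : m ≤ r := by
      have h1 : (univ : Finset (Fin m)).card ≤ (Finset.range r).card := by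
        apply Finset.card_le_card_of_injOn uf
        · intro j _; exact Finset.mem_range.mpr (huf_lt j)
        · intro j1 _ j2 _ h; exact huf_inj j1 j2 h
      simpa using h1
    omega


theorem stmt12 (c : ℕ) (n : Fin c → ℕ) (m k : ℕ) (hpos : ∀ i, 1 ≤ n i)
    (hle : m ≤ ∑ i, (n i - 1)) (hmod : (∑ i, (n i - 1)) % (m - 1) = k)
    (hk2 : 2 ≤ k) (hkm : k ≤ m - 2)
    (hmod2 : (∑ i, (n i - 1)) % (m - 2) = 0) (hodd : Odd (m + ∑ i, (n i - 1)))
    (hallodd : ∀ i, Odd (n i)) :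
    IsLeast {N | starPathRamseyProp c n m N} ((∑ i, (n i - 1)) + m - 1) := by
  classical
  set S := ∑ i, (n i - 1) with hSdef
  have hm4 : 4 ≤ m := by
    rcases Nat.lt_or_ge m 4 with h | h
    · interval_cases m <;> omega
    · exact h
  have hS2 : 2 * (S / 2) = S := by
    have h2 : (2 : ℕ) ∣ S := by
      apply Finset.dvd_sum
      intro i _
      obtain ⟨w, hw⟩ := hallodd i
      exact ⟨w, by omega⟩
    omega
  have hmodd : Odd m := by
    obtain ⟨w, hw⟩ := hodd
    rw [Nat.odd_iff]
    omega
  constructor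
  · -- membership: S + m - 1 is Ramsey
    intro Gs hd
    by_contra hcon
    push_neg at hcon
    obtain ⟨hstar, hpath⟩ := hcon
    apply hpath
    apply path_of_minDegree (Gs (Fin.last c)) hm4
    · intro v
      have hsum := degree_sum Gs hd v
      rw [Fin.sum_univ_castSucc] at hsum
      have hsum_le : ∑ i : Fin c,
          ((univ : Finset (Fin (S + m - 1))).filter ((Gs i.castSucc).Adj v ·)).card ≤ S :=
        Finset.sum_le_sum (fun i _ => no_star_degree (Gs i.castSucc) (hpos i) (hstar i) v)
      omega
    · rintro ⟨e, he⟩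
      have he0 : e ≠ 0 := by
        intro h0
        rw [h0, Nat.mul_zero] at he
        omega
      obtain ⟨e', rfl⟩ := Nat.exists_eq_succ_of_ne_zero he0
      have hexp : (m - 1) * (e' + 1) = (m - 1) * e' + (m - 1) := by ring
      have he2 : S + m - 1 = (m - 1) * e' + (m - 1) := he.trans hexp
      have hSe : S = (m - 1) * e' := by omega
      have hz : S % (m - 1) = 0 := by rw [hSe]; exact Nat.mul_mod_right _ _
      rw [hmod] at hz
      omega
  · -- lower bound
    intro N₀ hN₀
    by_contra hlt
    push_neg at hlt
    have hc : c ≠ 0 := by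
      intro h0
      subst h0
      rw [show S = 0 by rw [hSdef]; simp] at hle
      omega
    obtain ⟨c', rfl⟩ := Nat.exists_eq_succ_of_ne_zero hc
    exact no_ramsey_below n N₀ hpos hallodd hm4 hmodd
      (Nat.dvd_of_mod_eq_zero hmod2) hle (by rw [← hSdef]; omega) hN₀
end
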